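/- arXiv:1610.00532 — 4 statements merged into one kernel-verified Lean document; each statement's English description precedes it below -/
import Mathlib

section
/- Let G be a finite group of order n ≥ 2 in which every subgroup is normal (a Dedekind group), and let A be a finite set of size q ≥ 2. Then for any x, y ∈ A^G, there exists a bijective G-equivariant transformation τ : A^G → A^G with τ(xG) = yG if and only if G_x = G_y. -/
variable {G A : Type*}

/-- The right shift action of `G` on configurations `A^G`: `(x · g) h = x (h * g⁻¹)`. -/
def shift [Group G] (x : G → A) (g : G) : G → A := fun h => x (h * g⁻¹)

/-- A transformation of the configuration space is `G`-equivariant if it commutes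
with the shift action. -/
def equivariant [Group G] (τ : (G → A) → (G → A)) : Prop :=
  ∀ (x : G → A) (g : G), τ (shift x g) = shift (τ x) g

/-- The `G`-orbit of a configuration. -/
def orbit [Group G] (x : G → A) : Set (G → A) := Set.range (shift x)

/-- The stabilizer of a configuration, as a subgroup of `G`. -/
def stab [Group G] (x : G → A) : Subgroup G where
  carrier := {g : G | shift x g = x}
  one_mem' := by
    show shift x 1 = x
    funext h
    simp [shift]
  mul_mem' := by
    intro a b ha hb
    have ha' : shift x a = x := ha
    have hb' : shift x b = x := hb
    show shift x (a * b) = x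
    funext h
    show x (h * (a * b)⁻¹) = x h
    have key : h * (a * b)⁻¹ = h * b⁻¹ * a⁻¹ := by group
    rw [key]
    have h1 := congrFun ha' (h * b⁻¹)
    have h2 := congrFun hb' h
    simp only [shift] at h1 h2
    rw [h1, h2]
  inv_mem' := by
    intro a ha
    have ha' : shift x a = x := ha
    show shift x a⁻¹ = x
    funext h
    show x (h * a⁻¹⁻¹) = x h
    rw [inv_inv]
    have h1 := congrFun ha' (h * a)
    simp only [shift] at h1
    rw [mul_inv_cancel_right] at h1
    exact h1.symm

/-- Two subgroups `H`, `K` of `G` are conjugate, namely `K = g⁻¹ * H * g` for some `g ∈ G`. -/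
def conjSub [Group G] (H K : Subgroup G) : Prop :=
  ∃ g : G, ∀ a : G, a ∈ K ↔ g * a * g⁻¹ ∈ H

/-! An equivariant bijection preserves stabilizers, and in a Dedekind group all configurations of
one orbit share the same stabilizer, so `stab x = stab (τ x) = stab y`. Conversely, `stab x = stab y`
makes `shift x g ↦ shift y g` well defined; if the two orbits differ, exchanging them through this
map and fixing every other configuration gives an equivariant involution. -/

section Shift

variable [Group G]

@[simp]
lemma shift_one (x : G → A) : shift x 1 = x := by
  funext k
  simp [shift]

@[simp]
lemma shift_shift (x : G → A) (g h : G) : shift (shift x g) h = shift x (g * h) := by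
  funext k
  simp [shift, mul_assoc]

lemma mem_stab {x : G → A} {g : G} : g ∈ stab x ↔ shift x g = x := Iff.rfl

lemma shift_mem_orbit (x : G → A) (g : G) : shift x g ∈ orbit x := ⟨g, rfl⟩

lemma self_mem_orbit (x : G → A) : x ∈ orbit x := ⟨1, shift_one x⟩

lemma shift_eq_shift_iff (x : G → A) (a b : G) : shift x a = shift x b ↔ a * b⁻¹ ∈ stab x := by
  rw [mem_stab]
  constructor
  · intro h
    rw [← shift_shift, h, shift_shift, mul_inv_cancel, shift_one]
  · intro h
    conv_rhs => rw [← h]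
    rw [shift_shift, inv_mul_cancel_right]

lemma shift_eq_shift_of_stab_eq {x y : G → A} (hs : stab x = stab y) {a b : G}
    (hab : shift x a = shift x b) : shift y a = shift y b := by
  rwa [shift_eq_shift_iff, ← hs, ← shift_eq_shift_iff]

lemma stab_shift_of_normal (y : G → A) (hy : (stab y).Normal) (g : G) :
    stab (shift y g) = stab y := by
  ext h
  rw [mem_stab, shift_shift, shift_eq_shift_iff]
  constructor
  · intro hm
    simpa [mul_assoc] using hy.conj_mem _ hm g⁻¹
  · exact fun hm => hy.conj_mem _ hm g

lemma shift_mem_orbit_iff {x z : G → A} {g : G} : shift z g ∈ orbit x ↔ z ∈ orbit x := by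
  constructor
  · rintro ⟨b, hb⟩
    refine ⟨b * g⁻¹, ?_⟩
    rw [← shift_shift, hb, shift_shift, mul_inv_cancel, shift_one]
  · rintro ⟨b, rfl⟩
    rw [shift_shift]
    exact shift_mem_orbit x _

lemma orbit_subset_of_mem {x y : G → A} (h : x ∈ orbit y) : orbit x ⊆ orbit y := by
  rintro _ ⟨g, rfl⟩
  exact shift_mem_orbit_iff.2 h

lemma orbit_eq_or_disjoint (x y : G → A) : orbit x = orbit y ∨ Disjoint (orbit x) (orbit y) := by
  refine or_iff_not_imp_right.2 fun h => ?_
  obtain ⟨_, ⟨a, rfl⟩, hy⟩ := Set.not_disjoint_iff.1 h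
  obtain ⟨b, hb⟩ := hy
  have hxy : x ∈ orbit y := shift_mem_orbit_iff.1 ⟨b, hb⟩
  have hyx : y ∈ orbit x := shift_mem_orbit_iff.1 ⟨a, hb.symm⟩
  exact (orbit_subset_of_mem hxy).antisymm (orbit_subset_of_mem hyx)

lemma stab_apply_eq_of_injective {τ : (G → A) → (G → A)} (hτ : equivariant τ)
    (hinj : Function.Injective τ) (x : G → A) : stab (τ x) = stab x := by
  ext g
  rw [mem_stab, mem_stab, ← hτ]
  exact hinj.eq_iff

end Shift

section OrbitSwap

variable [Group G]

open Classical in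
/-- `shift x g ↔ shift y g` on the two orbits, the identity elsewhere. -/
noncomputable def orbitSwap (x y : G → A) (z : G → A) : G → A :=
  if hx : z ∈ orbit x then shift y hx.choose
  else if hy : z ∈ orbit y then shift x hy.choose
  else z

variable {x y : G → A}

lemma orbitSwap_shift_left (hs : stab x = stab y) (g : G) :
    orbitSwap x y (shift x g) = shift y g := by
  have hz := shift_mem_orbit x g
  rw [orbitSwap, dif_pos hz]
  exact shift_eq_shift_of_stab_eq hs hz.choose_spec

lemma orbitSwap_shift_right (hs : stab x = stab y) (hxy : Disjoint (orbit x) (orbit y)) (g : G) :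
    orbitSwap x y (shift y g) = shift x g := by
  have hz := shift_mem_orbit y g
  rw [orbitSwap, dif_neg (Set.disjoint_right.1 hxy hz), dif_pos hz]
  exact shift_eq_shift_of_stab_eq hs.symm hz.choose_spec

lemma orbitSwap_of_notMem {z : G → A} (hx : z ∉ orbit x) (hy : z ∉ orbit y) :
    orbitSwap x y z = z := by
  rw [orbitSwap, dif_neg hx, dif_neg hy]

lemma equivariant_orbitSwap (hs : stab x = stab y) (hxy : Disjoint (orbit x) (orbit y)) :
    equivariant (orbitSwap x y) := by
  intro z g
  by_cases hx : z ∈ orbit x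
  · obtain ⟨a, rfl⟩ := hx
    rw [shift_shift, orbitSwap_shift_left hs, orbitSwap_shift_left hs, shift_shift]
  by_cases hy : z ∈ orbit y
  · obtain ⟨a, rfl⟩ := hy
    rw [shift_shift, orbitSwap_shift_right hs hxy, orbitSwap_shift_right hs hxy, shift_shift]
  rw [orbitSwap_of_notMem (mt shift_mem_orbit_iff.1 hx) (mt shift_mem_orbit_iff.1 hy),
    orbitSwap_of_notMem hx hy]

lemma involutive_orbitSwap (hs : stab x = stab y) (hxy : Disjoint (orbit x) (orbit y)) :
    Function.Involutive (orbitSwap x y) := by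
  intro z
  by_cases hx : z ∈ orbit x
  · obtain ⟨a, rfl⟩ := hx
    rw [orbitSwap_shift_left hs, orbitSwap_shift_right hs hxy]
  by_cases hy : z ∈ orbit y
  · obtain ⟨a, rfl⟩ := hy
    rw [orbitSwap_shift_right hs hxy, orbitSwap_shift_left hs]
  rw [orbitSwap_of_notMem hx hy, orbitSwap_of_notMem hx hy]

lemma image_orbitSwap_orbit (hs : stab x = stab y) : orbitSwap x y '' orbit x = orbit y := by
  rw [orbit, ← Set.range_comp]
  exact congrArg Set.range (funext (orbitSwap_shift_left hs))

end OrbitSwap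

lemma exists_bijective_equivariant_image_orbit_eq [Group G] {x y : G → A}
    (hs : stab x = stab y) :
    ∃ τ : (G → A) → (G → A), Function.Bijective τ ∧ equivariant τ ∧ τ '' orbit x = orbit y := by
  rcases orbit_eq_or_disjoint x y with hxy | hxy
  · exact ⟨id, Function.bijective_id, fun _ _ => rfl, by rw [Set.image_id, hxy]⟩
  · exact ⟨orbitSwap x y, (involutive_orbitSwap hs hxy).bijective,
      equivariant_orbitSwap hs hxy, image_orbitSwap_orbit hs⟩

theorem dedekind_exists_invertible_orbit_iff_stab_eq_general [Group G]
    (hded : ∀ H : Subgroup G, H.Normal) (x y : G → A) :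
    (∃ τ : (G → A) → (G → A), Function.Bijective τ ∧ equivariant τ ∧
        τ '' orbit x = orbit y) ↔
      stab x = stab y := by
  refine ⟨fun ⟨τ, hbij, hτ, himg⟩ => ?_, exists_bijective_equivariant_image_orbit_eq⟩
  obtain ⟨g, hg⟩ : τ x ∈ orbit y := himg ▸ Set.mem_image_of_mem τ (self_mem_orbit x)
  rw [← stab_apply_eq_of_injective hτ hbij.injective x, ← hg,
    stab_shift_of_normal y (hded _) g]

/-- if every subgroup of `G` is normal (Dedekind group), then for all
configurations `x`, `y` there is a bijective `G`-equivariant transformation mapping the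
orbit of `x` onto the orbit of `y` iff `stab x = stab y`. -/
theorem dedekind_exists_invertible_orbit_iff_stab_eq [Group G] [Fintype G] [Fintype A]
    (hn : 2 ≤ Fintype.card G) (hq : 2 ≤ Fintype.card A)
    (hded : ∀ H : Subgroup G, H.Normal) (x y : G → A) :
    (∃ τ : (G → A) → (G → A), Function.Bijective τ ∧ equivariant τ ∧
        τ '' orbit x = orbit y) ↔
      stab x = stab y :=
  dedekind_exists_invertible_orbit_iff_stab_eq_general hded x y
end

section
/- Let G be a finite group and A a finite set of size q ≥ 2. Let R be a set of subgroups of G containing exactly one representative from each conjugacy class of subgroups. For each H ∈ R, let α_H denote the number of G-orbits on A^G all of whose configurations have stabilizer conjugate to H. Then the number of bijective G-equivariant transformations of A^G equals the product over H ∈ R of ( |N_G(H)| / |H| )^{α_H} · (α_H)!, where N_G(H) is the normalizer of H in G. -/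
variable {G A : Type*}

/-! An equivariant bijection `τ` is determined by the images `τ (r q)` of orbit representatives
`r q`, and any choice of images with the same stabilizers as the `r q`, lying in pairwise distinct
orbits, extends to one. Choose every `r q` with stabilizer in `R`. Then `τ` permutes the orbits of
each stabilizer type `H` (`α H !` choices), and the possible images of `r q` in a given orbit of
type `H` are the points there with stabilizer exactly `H`: one orbit of `N_G(H)`, of size
`|N_G(H)| / |H|`. -/

open MulAction Function

section ConjugateSubgroups

variable [Group G]

theorem conjSub_refl (H : Subgroup G) : conjSub H H := ⟨1, fun a => by simp⟩

theorem conjSub.symm {H K : Subgroup G} (h : conjSub H K) : conjSub K H := by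
  obtain ⟨g, hg⟩ := h
  exact ⟨g⁻¹, fun a => by simp [hg, mul_assoc]⟩

end ConjugateSubgroups

section GSet

variable [Group G] {X : Type*} [MulAction G X]

theorem smul_eq_smul_iff_inv_mul_mem_stabilizer {g h : G} {x : X} :
    g • x = h • x ↔ h⁻¹ * g ∈ stabilizer G x := by
  rw [mem_stabilizer_iff, mul_smul, inv_smul_eq_iff]

theorem conjSub_stabilizer_smul (g : G) (x : X) :
    conjSub (stabilizer G (g • x)) (stabilizer G x) :=
  ⟨g, fun a => by
    rw [stabilizer_smul_eq_stabilizer_map_conj, Subgroup.mem_map_equiv, MulAut.conj_symm_apply]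
    simp [mul_assoc]⟩

theorem exists_stabilizer_smul_eq {H : Subgroup G} {x : X} (h : conjSub H (stabilizer G x)) :
    ∃ g : G, stabilizer G (g • x) = H := by
  obtain ⟨g, hg⟩ := h
  refine ⟨g, Subgroup.ext fun a => ?_⟩
  rw [stabilizer_smul_eq_stabilizer_map_conj, Subgroup.mem_map_equiv, MulAut.conj_symm_apply, hg]
  simp [mul_assoc]

theorem stabilizer_smul_eq_self_iff {g : G} {x : X} :
    stabilizer G (g • x) = stabilizer G x ↔
      g ∈ Subgroup.normalizer (stabilizer G x : Set G) := by
  rw [stabilizer_smul_eq_stabilizer_map_conj, Subgroup.mem_normalizer_iff_map_conj_eq]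
  rfl

theorem orbit_normalizer_stabilizer (x : X) :
    orbit (Subgroup.normalizer (stabilizer G x : Set G)) x =
      {y | y ∈ orbit G x ∧ stabilizer G y = stabilizer G x} := by
  ext y
  constructor
  · rintro ⟨n, rfl⟩
    exact ⟨mem_orbit x (n : G), stabilizer_smul_eq_self_iff.mpr n.2⟩
  · rintro ⟨⟨g, rfl⟩, hg⟩
    exact ⟨⟨g, stabilizer_smul_eq_self_iff.mp hg⟩, rfl⟩

theorem card_sameStabilizer_mul_card_stabilizer (x : X) :
    Nat.card {y | y ∈ orbit G x ∧ stabilizer G y = stabilizer G x} * Nat.card (stabilizer G x) =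
      Nat.card (Subgroup.normalizer (stabilizer G x : Set G)) := by
  set N := Subgroup.normalizer (stabilizer G x : Set G)
  have hstab : stabilizer N x = (stabilizer G x).subgroupOf N := rfl
  rw [← orbit_normalizer_stabilizer, ← Subgroup.index_mul_card (stabilizer N x),
    index_stabilizer, Nat.card_coe_set_eq, hstab,
    Nat.card_congr (Subgroup.subgroupOfEquivOfLe Subgroup.le_normalizer).toEquiv]

theorem stabilizer_apply_eq_of_injective {τ : X → X} (hτ : Injective τ)
    (hequiv : ∀ (g : G) x, τ (g • x) = g • τ x) (x : X) :
    stabilizer G (τ x) = stabilizer G x := by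
  ext g
  rw [mem_stabilizer_iff, mem_stabilizer_iff, ← hequiv, hτ.eq_iff]

theorem mk_eq_mk_iff_mem_orbit {x y : X} :
    (Quotient.mk'' x : orbitRel.Quotient G X) = Quotient.mk'' y ↔ x ∈ orbit G y :=
  Quotient.eq''.trans orbitRel_apply

theorem mk_smul_eq_mk (g : G) (x : X) :
    (Quotient.mk'' (g • x) : orbitRel.Quotient G X) = Quotient.mk'' x :=
  mk_eq_mk_iff_mem_orbit.mpr (mem_orbit x g)

theorem mk_eq_mk_of_mk_apply_eq {τ : X → X} (hτ : Injective τ)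
    (hequiv : ∀ (g : G) x, τ (g • x) = g • τ x) {x y : X}
    (h : (Quotient.mk'' (τ x) : orbitRel.Quotient G X) = Quotient.mk'' (τ y)) :
    (Quotient.mk'' x : orbitRel.Quotient G X) = Quotient.mk'' y := by
  obtain ⟨g, hg : g • τ y = τ x⟩ := mk_eq_mk_iff_mem_orbit.mp h
  rw [← hequiv] at hg
  rw [← hτ hg, mk_smul_eq_mk]

section OrbitReps

variable {r : orbitRel.Quotient G X → X}

theorem exists_smul_orbitRep_eq (hr : ∀ q, (Quotient.mk'' (r q) : orbitRel.Quotient G X) = q)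
    (x : X) : ∃ g : G, g • r (Quotient.mk'' x) = x :=
  mk_eq_mk_iff_mem_orbit.mp (hr _).symm

theorem conjSub_stabilizer_orbitRep
    (hr : ∀ q, (Quotient.mk'' (r q) : orbitRel.Quotient G X) = q) (y : X) :
    conjSub (stabilizer G y) (stabilizer G (r (Quotient.mk'' y))) := by
  obtain ⟨g, hg⟩ := exists_smul_orbitRep_eq hr y
  have h := conjSub_stabilizer_smul g (r (Quotient.mk'' y))
  rwa [hg] at h

theorem card_mk_eq_stabilizer_eq [Finite G]
    (hr : ∀ q, (Quotient.mk'' (r q) : orbitRel.Quotient G X) = q) (q : orbitRel.Quotient G X) :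
    Nat.card {y : X // (Quotient.mk'' y : orbitRel.Quotient G X) = q ∧
        stabilizer G y = stabilizer G (r q)} =
      Nat.card (Subgroup.normalizer (stabilizer G (r q) : Set G)) /
        Nat.card (stabilizer G (r q)) := by
  rw [← card_sameStabilizer_mul_card_stabilizer (r q), Nat.mul_div_cancel _ Nat.card_pos]
  refine Nat.card_congr (Equiv.subtypeEquivRight fun y => ?_)
  rw [Set.mem_ofPred_eq, ← mk_eq_mk_iff_mem_orbit, hr]

/-- The `G`-equivariant map sending `g • r q` to `g • f q`; it is well defined when the
stabilizer of `r q` fixes `f q`. -/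
noncomputable def equivariantExtension
    (hr : ∀ q, (Quotient.mk'' (r q) : orbitRel.Quotient G X) = q)
    (f : orbitRel.Quotient G X → X) : X → X :=
  fun x => (exists_smul_orbitRep_eq hr x).choose • f (Quotient.mk'' x)

section Extension

variable (hr : ∀ q, (Quotient.mk'' (r q) : orbitRel.Quotient G X) = q)
  {f : orbitRel.Quotient G X → X}

theorem equivariantExtension_apply (hf : ∀ q, stabilizer G (r q) ≤ stabilizer G (f q))
    {x : X} {g : G} (hg : g • r (Quotient.mk'' x) = x) :
    equivariantExtension hr f x = g • f (Quotient.mk'' x) := by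
  have hc := (exists_smul_orbitRep_eq hr x).choose_spec
  exact smul_eq_smul_iff_inv_mul_mem_stabilizer.mpr
    (hf _ (smul_eq_smul_iff_inv_mul_mem_stabilizer.mp (hc.trans hg.symm)))

theorem equivariantExtension_smul (hf : ∀ q, stabilizer G (r q) ≤ stabilizer G (f q))
    (g : G) (x : X) : equivariantExtension hr f (g • x) = g • equivariantExtension hr f x := by
  obtain ⟨c, hc⟩ := exists_smul_orbitRep_eq hr x
  have hq := mk_smul_eq_mk g x
  rw [equivariantExtension_apply hr hf (g := g * c) (by rw [hq, mul_smul, hc]),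
    equivariantExtension_apply hr hf hc, hq, mul_smul]

theorem equivariantExtension_injective (hf : ∀ q, stabilizer G (f q) = stabilizer G (r q))
    (hinj : Injective fun q => (Quotient.mk'' (f q) : orbitRel.Quotient G X)) :
    Injective (equivariantExtension hr f) := by
  intro x y hxy
  obtain ⟨c, hc⟩ := exists_smul_orbitRep_eq hr x
  obtain ⟨d, hd⟩ := exists_smul_orbitRep_eq hr y
  rw [equivariantExtension_apply hr (fun q => (hf q).ge) hc,
    equivariantExtension_apply hr (fun q => (hf q).ge) hd] at hxy
  have hq : (Quotient.mk'' x : orbitRel.Quotient G X) = Quotient.mk'' y :=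
    hinj (((mk_smul_eq_mk c _).symm.trans (congrArg Quotient.mk'' hxy)).trans (mk_smul_eq_mk d _))
  rw [hq] at hxy hc
  have hcd : c • r (Quotient.mk'' y) = d • r (Quotient.mk'' y) :=
    smul_eq_smul_iff_inv_mul_mem_stabilizer.mpr
      (hf _ ▸ smul_eq_smul_iff_inv_mul_mem_stabilizer.mp hxy)
  exact hc.symm.trans (hcd.trans hd)

noncomputable def equivariantBijectionEquiv [Finite X] :
    {τ : X → X // Bijective τ ∧ ∀ (g : G) x, τ (g • x) = g • τ x} ≃
      {f : orbitRel.Quotient G X → X // (∀ q, stabilizer G (f q) = stabilizer G (r q)) ∧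
        Injective fun q => (Quotient.mk'' (f q) : orbitRel.Quotient G X)} where
  toFun τ := ⟨τ.1 ∘ r,
    fun q => stabilizer_apply_eq_of_injective τ.2.1.injective τ.2.2 (r q),
    fun q q' h => by
      rw [← hr q, ← hr q']
      exact mk_eq_mk_of_mk_apply_eq τ.2.1.injective τ.2.2 h⟩
  invFun f := ⟨equivariantExtension hr f.1,
    Finite.injective_iff_bijective.mp (equivariantExtension_injective hr f.2.1 f.2.2),
    equivariantExtension_smul hr fun q => (f.2.1 q).ge⟩
  left_inv τ := Subtype.ext <| funext fun x => by
    obtain ⟨c, hc⟩ := exists_smul_orbitRep_eq hr x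
    show equivariantExtension hr (τ.1 ∘ r) x = τ.1 x
    rw [equivariantExtension_apply hr (f := τ.1 ∘ r)
      (fun q => (stabilizer_apply_eq_of_injective τ.2.1.injective τ.2.2 (r q)).ge) hc]
    rw [comp_apply, ← τ.2.2, hc]
  right_inv f := Subtype.ext <| funext fun q => by
    show equivariantExtension hr f.1 (r q) = f.1 q
    rw [equivariantExtension_apply hr (fun q => (f.2.1 q).ge) (g := 1) (by rw [one_smul, hr]),
      one_smul, hr]

end Extension

theorem card_orbitRep_images [Finite G] [Finite X] [Fintype (orbitRel.Quotient G X)]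
    (hr : ∀ q, (Quotient.mk'' (r q) : orbitRel.Quotient G X) = q)
    (hS : ∀ q q', conjSub (stabilizer G (r q)) (stabilizer G (r q')) →
      stabilizer G (r q) = stabilizer G (r q')) :
    Nat.card {f : orbitRel.Quotient G X → X //
        (∀ q, stabilizer G (f q) = stabilizer G (r q)) ∧
          Injective fun q => (Quotient.mk'' (f q) : orbitRel.Quotient G X)} =
      Nat.card {σ : Equiv.Perm (orbitRel.Quotient G X) //
          (fun q => stabilizer G (r q)) ∘ σ = fun q => stabilizer G (r q)} *
        ∏ q, Nat.card (Subgroup.normalizer (stabilizer G (r q) : Set G)) /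
          Nat.card (stabilizer G (r q)) := by
  let T := {f : orbitRel.Quotient G X → X // (∀ q, stabilizer G (f q) = stabilizer G (r q)) ∧
    Injective fun q => (Quotient.mk'' (f q) : orbitRel.Quotient G X)}
  let P := {σ : Equiv.Perm (orbitRel.Quotient G X) //
    (fun q => stabilizer G (r q)) ∘ σ = fun q => stabilizer G (r q)}
  let Fiber (σ : P) (q : orbitRel.Quotient G X) := {y : X //
    (Quotient.mk'' y : orbitRel.Quotient G X) = σ.1 q ∧ stabilizer G y = stabilizer G (r q)}
  let orbitPerm (f : T) : P :=
    ⟨Equiv.ofBijective _ (Finite.injective_iff_bijective.mp f.2.2), funext fun q =>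
      (hS _ _ (f.2.1 q ▸ conjSub_stabilizer_orbitRep hr (f.1 q))).symm⟩
  let fiberEquiv (σ : P) : {f : T // orbitPerm f = σ} ≃ ∀ q, Fiber σ q :=
    { toFun := fun f q => ⟨f.1.1 q, congrArg (fun σ : P => σ.1 q) f.2, f.1.2.1 q⟩
      invFun := fun y => ⟨⟨fun q => (y q).1, fun q => (y q).2.2, by
          have : (fun q => (Quotient.mk'' (y q).1 : orbitRel.Quotient G X)) = σ.1 :=
            funext fun q => (y q).2.1
          rw [this]
          exact σ.1.injective⟩, Subtype.ext <| Equiv.ext fun q => (y q).2.1⟩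
      left_inv := fun _ => rfl
      right_inv := fun _ => rfl }
  have card_fiber (σ : P) (q) : Nat.card (Fiber σ q) =
      Nat.card (Subgroup.normalizer (stabilizer G (r q) : Set G)) /
        Nat.card (stabilizer G (r q)) := by
    have hσ : stabilizer G (r (σ.1 q)) = stabilizer G (r q) := congrFun σ.2 q
    rw [← hσ, ← card_mk_eq_stabilizer_eq hr, hσ]
  have : Fintype P := Fintype.ofFinite P
  calc Nat.card T = Nat.card (Σ σ : P, ∀ q, Fiber σ q) :=
        Nat.card_congr ((Equiv.sigmaFiberEquiv orbitPerm).symm.trans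
          (Equiv.sigmaCongrRight fiberEquiv))
    _ = ∑ _σ : P, ∏ q, Nat.card (Subgroup.normalizer (stabilizer G (r q) : Set G)) /
          Nat.card (stabilizer G (r q)) := by
        simp only [Nat.card_sigma, Nat.card_pi, card_fiber]
    _ = _ := by rw [Finset.sum_const, Finset.card_univ, smul_eq_mul, Nat.card_eq_fintype_card]

theorem card_orbits_conjSub_eq {R : Set (Subgroup G)} (hR : ∀ K, ∃! H, H ∈ R ∧ conjSub H K)
    (hr : ∀ q, (Quotient.mk'' (r q) : orbitRel.Quotient G X) = q)
    (hrR : ∀ q, stabilizer G (r q) ∈ R) {H : Subgroup G} (hH : H ∈ R) :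
    Nat.card {O : Set X // ∃ x, O = MulAction.orbit G x ∧ conjSub (stabilizer G x) H} =
      Nat.card {q : orbitRel.Quotient G X // stabilizer G (r q) = H} := by
  refine (Nat.card_eq_of_bijective (fun q => ⟨MulAction.orbit G (r q.1), r q.1, rfl,
    by rw [q.2]; exact conjSub_refl H⟩) ⟨fun q q' h => Subtype.ext ?_, ?_⟩).symm
  · rw [← hr q.1, ← hr q'.1]
    exact mk_eq_mk_iff_mem_orbit.mpr (orbit_eq_iff.mp (congrArg Subtype.val h))
  · rintro ⟨O, x, rfl, hx⟩
    have hstab :=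
      (hR _).unique ⟨hrR _, (conjSub_stabilizer_orbitRep hr x).symm⟩ ⟨hH, hx.symm⟩
    exact ⟨⟨Quotient.mk'' x, hstab⟩, Subtype.ext (orbit_eq_iff.mpr
      (mk_eq_mk_iff_mem_orbit.mp (hr _)))⟩

end OrbitReps

theorem exists_orbitReps_stabilizer_mem {R : Set (Subgroup G)}
    (hR : ∀ K, ∃ H ∈ R, conjSub H K) :
    ∃ r : orbitRel.Quotient G X → X,
      (∀ q, (Quotient.mk'' (r q) : orbitRel.Quotient G X) = q) ∧
        ∀ q, stabilizer G (r q) ∈ R := by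
  have (q : orbitRel.Quotient G X) : ∃ x : X, Quotient.mk'' x = q ∧ stabilizer G x ∈ R := by
    obtain ⟨H, hH, hconj⟩ := hR (stabilizer G q.out)
    obtain ⟨g, hg⟩ := exists_stabilizer_smul_eq hconj
    exact ⟨g • q.out, by rw [mk_smul_eq_mk, Quotient.out_eq'], hg ▸ hH⟩
  choose r hr hrR using this
  exact ⟨r, hr, hrR⟩

end GSet

theorem card_perm_comp_eq_mul_prod {ι κ : Type*} [Fintype ι] (s : ι → κ) (R : Finset κ)
    (hs : ∀ i, s i ∈ R) (c : κ → ℕ) :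
    Nat.card {σ : Equiv.Perm ι // s ∘ σ = s} * ∏ i, c (s i) =
      ∏ k ∈ R, c k ^ Nat.card {i // s i = k} * (Nat.card {i // s i = k}).factorial := by
  classical
  rw [Nat.card_eq_fintype_card, DomMulAct.stabilizer_card', Finset.prod_comp c s,
    ← Finset.prod_mul_distrib]
  simp only [Nat.card_eq_fintype_card, Fintype.card_subtype]
  refine (Finset.prod_subset ?_ fun k _ hk => ?_).trans
    (Finset.prod_congr rfl fun _ _ => mul_comm _ _)
  · simpa [Finset.subset_iff] using hs
  · simp_all

theorem card_bijective_equivariant {G X : Type*} [Group G] [MulAction G X] [Finite G] [Finite X]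
    (R : Finset (Subgroup G))
    (hR : ∀ K : Subgroup G, ∃! H : Subgroup G, H ∈ R ∧ conjSub H K) :
    Nat.card {τ : X → X // Bijective τ ∧ ∀ (g : G) x, τ (g • x) = g • τ x} =
      ∏ H ∈ R, (Nat.card (Subgroup.normalizer (H : Set G)) / Nat.card H) ^
          Nat.card {O : Set X // ∃ x, O = MulAction.orbit G x ∧ conjSub (stabilizer G x) H} *
        (Nat.card {O : Set X //
          ∃ x, O = MulAction.orbit G x ∧ conjSub (stabilizer G x) H}).factorial := by
  classical
  have := Fintype.ofFinite (orbitRel.Quotient G X)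
  obtain ⟨r, hr, hrR⟩ :=
    exists_orbitReps_stabilizer_mem (X := X) (R := R) fun K => (hR K).exists
  have hS q q' (h : conjSub (stabilizer G (r q)) (stabilizer G (r q'))) :
      stabilizer G (r q) = stabilizer G (r q') :=
    (hR _).unique ⟨hrR q, h⟩ ⟨hrR q', conjSub_refl _⟩
  rw [Nat.card_congr (equivariantBijectionEquiv hr), card_orbitRep_images hr hS]
  refine (card_perm_comp_eq_mul_prod (fun q => stabilizer G (r q)) R hrR
    fun H => Nat.card (Subgroup.normalizer (H : Set G)) / Nat.card H).trans ?_
  exact Finset.prod_congr rfl fun H hH => by rw [card_orbits_conjSub_eq hR hr hrR hH]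

section ShiftAction

variable [Group G]

abbrev shiftAction : MulAction G (G → A) where
  smul g x := shift x g⁻¹
  one_smul x := funext fun h => show x (h * 1⁻¹⁻¹) = x h by simp
  mul_smul g g' x := funext fun h =>
    show x (h * (g * g')⁻¹⁻¹) = x (h * g⁻¹⁻¹ * g'⁻¹⁻¹) by simp [mul_assoc]

attribute [local instance] shiftAction

theorem shift_eq_inv_smul (x : G → A) (g : G) : shift x g = g⁻¹ • x := by
  show shift x g = shift x g⁻¹⁻¹
  rw [inv_inv]

theorem stab_eq_stabilizer (x : G → A) : stab x = stabilizer G x := by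
  ext g
  show shift x g = x ↔ g • x = x
  rw [shift_eq_inv_smul, inv_smul_eq_iff, eq_comm]

theorem orbit_eq_orbit (x : G → A) : orbit x = MulAction.orbit G x := by
  ext y
  constructor
  · rintro ⟨g, rfl⟩
    exact ⟨g⁻¹, (shift_eq_inv_smul x g).symm⟩
  · rintro ⟨g, rfl⟩
    exact ⟨g⁻¹, by rw [shift_eq_inv_smul, inv_inv]⟩

theorem equivariant_iff_smul (τ : (G → A) → (G → A)) :
    equivariant τ ↔ ∀ (g : G) x, τ (g • x) = g • τ x := by
  refine ⟨fun h g x => ?_, fun h x g => by rw [shift_eq_inv_smul, shift_eq_inv_smul, h]⟩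
  simpa [shift_eq_inv_smul] using h x g⁻¹

end ShiftAction

theorem card_invertible_CA_general [Group G] [Fintype G] [Fintype A]
    (R : Finset (Subgroup G))
    (hR : ∀ K : Subgroup G, ∃! H : Subgroup G, H ∈ R ∧ conjSub H K)
    (α : Subgroup G → ℕ)
    (hα : ∀ H : Subgroup G,
      α H = Nat.card {O : Set (G → A) // ∃ x : G → A, O = orbit x ∧ conjSub (stab x) H}) :
    Nat.card {τ : (G → A) → (G → A) // Function.Bijective τ ∧ equivariant τ} =
      ∏ H ∈ R, (Nat.card (Subgroup.normalizer (H : Set G)) / Nat.card H) ^ (α H) * (α H).factorial := by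
  let _ : MulAction G (G → A) := shiftAction
  simp only [hα, stab_eq_stabilizer, orbit_eq_orbit, equivariant_iff_smul]
  exact card_bijective_equivariant R hR

/-- structure of `ICA(G;A)`, cardinality version: if `R` contains
exactly one representative of each conjugacy class of subgroups of `G`, and for
`H ∈ R`, `α H` is the number of `G`-orbits on `A^G` whose configurations have
stabilizer conjugate to `H`, then the number of bijective `G`-equivariant
transformations of `A^G` is `∏_{H ∈ R} (|N_G(H)|/|H|)^{α H} · (α H)!`. -/
theorem card_invertible_CA [Group G] [Fintype G] [Fintype A]
    (hq : 2 ≤ Fintype.card A)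
    (R : Finset (Subgroup G))
    (hR : ∀ K : Subgroup G, ∃! H : Subgroup G, H ∈ R ∧ conjSub H K)
    (α : Subgroup G → ℕ)
    (hα : ∀ H : Subgroup G,
      α H = Nat.card {O : Set (G → A) // ∃ x : G → A, O = orbit x ∧ conjSub (stab x) H}) :
    Nat.card {τ : (G → A) → (G → A) // Function.Bijective τ ∧ equivariant τ} =
      ∏ H ∈ R, (Nat.card (Subgroup.normalizer (H : Set G)) / Nat.card H) ^ (α H) * (α H).factorial :=
  card_invertible_CA_general R hR α hα
end

section
/- Let G be a finite group, A a finite set, and H a normal subgroup of G. Then the number of configurations x ∈ A^G with stabilizer G_x = H equals the number of configurations y ∈ A^{G/H} whose stabilizer under the shift action of the quotient group G/H is trivial. -/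
variable {G A : Type*}

/-! A configuration whose stabilizer contains the normal subgroup `H` is constant on the cosets
of `H`, so it is the pull-back `y ∘ π` of a unique configuration `y` on `G ⧸ H`, where
`π : G → G ⧸ H` is the projection. Since `π` is a surjective homomorphism, pull-back turns
stabilizers into their preimages: `stab (y ∘ π) = π⁻¹ (stab y)`, which equals `H = π⁻¹ ⊥`
exactly when `stab y = ⊥`. -/

section

variable {Q : Type*} [Group G] [Group Q]

lemma shift_comp (f : G →* Q) (y : Q → A) (g : G) :
    shift (y ∘ f) g = shift y (f g) ∘ f := by
  funext h
  simp [shift]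

lemma stab_comp_of_surjective {f : G →* Q} (hf : Function.Surjective f)
    (y : Q → A) : stab (y ∘ f) = (stab y).comap f := by
  ext g
  change shift (y ∘ f) g = y ∘ f ↔ shift y (f g) = y
  rw [shift_comp]
  exact hf.injective_comp_right.eq_iff

lemma stab_comp_mk_eq_iff (H : Subgroup G) [H.Normal] (y : G ⧸ H → A) :
    stab (y ∘ QuotientGroup.mk' H) = H ↔ stab y = ⊥ := by
  have hπ := QuotientGroup.mk'_surjective H
  have hker : (⊥ : Subgroup (G ⧸ H)).comap (QuotientGroup.mk' H) = H := by
    rw [MonoidHom.comap_bot, QuotientGroup.ker_mk']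
  rw [stab_comp_of_surjective hπ, ← (Subgroup.comap_injective hπ).eq_iff, hker]

lemma exists_comp_mk_eq_of_le_stab {H : Subgroup G} [H.Normal] {x : G → A}
    (hx : H ≤ stab x) : ∃ y : G ⧸ H → A, y ∘ QuotientGroup.mk' H = x := by
  refine ⟨fun q => q.liftOn' x fun a b hab => ?_, rfl⟩
  have hba : x (b * (a⁻¹ * b)⁻¹) = x b := congrFun (hx (QuotientGroup.leftRel_apply.mp hab)) b
  rwa [mul_inv_rev, inv_inv, mul_inv_cancel_left] at hba

end

theorem card_stab_eq_normal_general [Group G]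
    (H : Subgroup G) [hH : H.Normal] :
    Nat.card {x : G → A // stab x = H} =
      Nat.card {y : G ⧸ H → A // stab y = ⊥} := by
  symm
  refine Nat.card_eq_of_bijective
    (fun y => ⟨y.1 ∘ QuotientGroup.mk' H, (stab_comp_mk_eq_iff H y.1).mpr y.2⟩) ⟨?_, ?_⟩
  · intro y₁ y₂ h
    exact Subtype.ext ((QuotientGroup.mk'_surjective H).injective_comp_right
      (congrArg Subtype.val h))
  · rintro ⟨x, hx⟩
    obtain ⟨y, rfl⟩ := exists_comp_mk_eq_of_le_stab hx.ge
    exact ⟨⟨y, (stab_comp_mk_eq_iff H y).mp hx⟩, rfl⟩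

/-- for a normal subgroup `H` of `G`, the number of configurations
in `A^G` with stabilizer exactly `H` equals the number of configurations in
`A^{G/H}` with trivial stabilizer under the shift action of `G/H`. -/
theorem card_stab_eq_normal [Group G] [Fintype G] [Fintype A]
    (H : Subgroup G) [hH : H.Normal] :
    Nat.card {x : G → A // stab x = H} =
      Nat.card {y : G ⧸ H → A // stab y = ⊥} :=
  card_stab_eq_normal_general H (hH := hH)
end

section
/- Let G be a finite group of order n ≥ 2, let p be the smallest prime dividing n, and let c denote the number of elements of G of order exactly p. For each integer q ≥ 2 let f(q) be the number of configurations x : G → {0,…,q−1} with trivial stabilizer under the shift action. Then f(q) = q^n − (c/(p−1))·q^{n/p} + o(q^{n/p}) as q → ∞; that is, the function q ↦ f(q) − q^n + (c/(p−1))·q^{n/p} is little-o of q^{n/p} as q tends to infinity. -/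
variable {G A : Type*}

/-! A configuration fails to be aperiodic exactly when its stabilizer contains a subgroup of prime
order, and the configurations fixed by a subgroup `H` are the functions on `G ⧸ H`, so there are
`q ^ [G : H]` of them. Each subgroup of order `p` thus contributes `q ^ (n / p)`, while every other
subgroup of prime order, and the join of two distinct subgroups of order `p`, has order `> p` and
contributes `O(q ^ (n / p - 1))`. A union bound and a second-order Bonferroni bound pin the number
of non-aperiodic configurations to `N q ^ (n / p) + O(q ^ (n / p - 1))`, where
`N = c / (p - 1)` is the number of subgroups of order `p`, each holding `p - 1` elements of order `p`. -/

open Finset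

section GroupTheory

variable [Group G]

namespace Subgroup

theorem exists_card_prime_le_of_ne_bot [Finite G] {K : Subgroup G} (hK : K ≠ ⊥) :
    ∃ P ≤ K, (Nat.card P).Prime := by
  have hp : (Nat.card K).minFac.Prime := Nat.minFac_prime (mt card_eq_one.mp hK)
  have : Fact (Nat.card K).minFac.Prime := ⟨hp⟩
  obtain ⟨g, hg⟩ := exists_prime_orderOf_dvd_card' (G := K) _ (Nat.minFac_dvd _)
  refine ⟨zpowers (g : G), zpowers_le.mpr g.2, ?_⟩
  rwa [Nat.card_zpowers, orderOf_coe, hg]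

theorem zpowers_eq_of_card_prime [Finite G] {P : Subgroup G} (hP : (Nat.card P).Prime) {g : G}
    (hgP : g ∈ P) (hg : g ≠ 1) : zpowers g = P := by
  have hle : zpowers g ≤ P := zpowers_le.mpr hgP
  refine eq_of_le_of_card_ge hle ?_
  rcases hP.eq_one_or_self_of_dvd _ (card_dvd_of_le hle) with h | h
  · exact absurd (zpowers_eq_bot.mp (card_eq_one.mp h)) hg
  · exact h.ge

theorem card_lt_card_sup_of_ne [Finite G] {P P' : Subgroup G} (hcard : Nat.card P = Nat.card P')
    (hne : P ≠ P') : Nat.card P < Nat.card (P ⊔ P' : Subgroup G) := by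
  refine (card_le_of_le le_sup_left).lt_of_ne fun h => hne ?_
  have hP : P = P ⊔ P' := eq_of_le_of_card_ge le_sup_left h.ge
  exact hP.trans (eq_of_le_of_card_ge le_sup_right (hcard ▸ h.ge)).symm

theorem index_lt_div_of_lt_card [Finite G] {H : Subgroup G} {d : ℕ} (hd : d ∣ Nat.card G)
    (h : d < Nat.card H) : H.index < Nat.card G / d := by
  rw [Nat.lt_div_iff_mul_lt' hd, ← H.index_mul_card, mul_comm]
  exact Nat.mul_lt_mul_of_pos_left h (Nat.pos_of_ne_zero H.index_ne_zero_of_finite)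

end Subgroup

open Subgroup in
theorem card_orderOf_eq_prime [Fintype G] {r : ℕ} (hr : r.Prime) :
    Nat.card {g : G // orderOf g = r}
      = #{P : Subgroup G | Nat.card P = r} * (r - 1) := by
  classical
  have hfiber : ∀ P ∈ ({P : Subgroup G | Nat.card P = r} : Finset _),
      #(({g : G | orderOf g = r} : Finset G).filter (zpowers · = P)) = r - 1 := by
    intro P hP
    rw [mem_filter] at hP
    have hP' : (Nat.card P).Prime := hP.2 ▸ hr
    have hfiber_eq : ({g : G | orderOf g = r} : Finset G).filter (zpowers · = P)
        = ({g | g ∈ P} : Finset G).erase 1 := by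
      ext g
      simp only [mem_filter, mem_univ, true_and, mem_erase]
      constructor
      · rintro ⟨hg, rfl⟩
        exact ⟨fun h1 => hr.ne_one (by rw [← hg, h1, orderOf_one]), mem_zpowers g⟩
      · rintro ⟨hg1, hgP⟩
        have hz := zpowers_eq_of_card_prime hP' hgP hg1
        exact ⟨by rw [← Nat.card_zpowers, hz, hP.2], hz⟩
    rw [hfiber_eq, card_erase_of_mem (by simp [P.one_mem]), ← Fintype.card_subtype,
      ← Nat.card_eq_fintype_card, hP.2]
  rw [Nat.card_eq_fintype_card, Fintype.card_subtype,
    card_eq_sum_card_fiberwise (f := fun g => zpowers g) (t := {P : Subgroup G | Nat.card P = r})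
      (fun g hg => by
        rw [mem_coe, mem_filter] at hg ⊢
        exact ⟨mem_univ _, by rw [Nat.card_zpowers, hg.2]⟩),
    sum_congr rfl hfiber, sum_const, smul_eq_mul]

end GroupTheory

theorem Finset.sum_card_le_card_biUnion_add_sum_card_inter {ι α : Type*} [DecidableEq ι]
    [DecidableEq α] (s : Finset ι) (A : ι → Finset α) :
    ∑ i ∈ s, #(A i) ≤ #(s.biUnion A) + ∑ ij ∈ s.offDiag, #(A ij.1 ∩ A ij.2) := by
  set t : α → Finset ι := fun x => {i ∈ s | x ∈ A i}
  have hsingle : ∑ i ∈ s, #(A i) = ∑ x ∈ s.biUnion A, #(t x) := by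
    simp only [card_eq_sum_ones]
    exact sum_comm' fun i x => by simp [t]; tauto
  have hpairs :
      ∑ ij ∈ s.offDiag, #(A ij.1 ∩ A ij.2) = ∑ x ∈ s.biUnion A, #(t x).offDiag := by
    simp only [card_eq_sum_ones]
    exact sum_comm' fun ij x => by simp [t]; tauto
  rw [hsingle, hpairs, card_eq_sum_ones (s.biUnion A), ← sum_add_distrib]
  refine sum_le_sum fun x _ => ?_
  -- a point lying in `m` of the sets is counted `m` times on the left and `1 + m (m - 1)` times
  -- on the right
  rw [offDiag_card]
  have : 2 * #(t x) ≤ #(t x) * #(t x) + 1 := by nlinarith [sq_nonneg ((#(t x) : ℤ) - 1)]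
  omega

section Configurations

variable [Group G]

theorem le_stab_iff_leftRel_le_ker {x : G → A} {H : Subgroup G} :
    H ≤ stab x ↔ QuotientGroup.leftRel H ≤ Setoid.ker x := by
  constructor
  · intro hH a b hab
    rw [QuotientGroup.leftRel_apply] at hab
    have := congrFun (hH hab) b
    simp only [shift, mul_inv_rev, inv_inv, mul_inv_cancel_left] at this
    exact this
  · intro hH h hh
    funext g
    exact hH (by rw [QuotientGroup.leftRel_apply]; simpa using H.inv_mem hh)

theorem card_subtype_le_stab (H : Subgroup G) [H.FiniteIndex] :
    Nat.card {x : G → A // H ≤ stab x} = Nat.card A ^ H.index := by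
  have e : {x : G → A // H ≤ stab x} ≃ (G ⧸ H → A) :=
    (Equiv.subtypeEquivRight fun _ => le_stab_iff_leftRel_le_ker).trans (Setoid.liftEquiv _)
  rw [Nat.card_congr e, Nat.card_fun, H.index_eq_card]

end Configurations

section Counting

open scoped Classical

variable [Group G] [Fintype G] (A) [Fintype A]

noncomputable def fixedConfigs (H : Subgroup G) : Finset (G → A) := {x | H ≤ stab x}

theorem mem_fixedConfigs {H : Subgroup G} {x : G → A} :
    x ∈ fixedConfigs A H ↔ H ≤ stab x := by
  simp [fixedConfigs]

theorem card_fixedConfigs (H : Subgroup G) :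
    #(fixedConfigs A H) = Fintype.card A ^ H.index := by
  rw [fixedConfigs, ← Fintype.card_subtype, ← Nat.card_eq_fintype_card, card_subtype_le_stab,
    Nat.card_eq_fintype_card]

theorem fixedConfigs_inter (H K : Subgroup G) :
    fixedConfigs A H ∩ fixedConfigs A K = fixedConfigs A (H ⊔ K) := by
  ext x
  simp only [mem_inter, mem_fixedConfigs, sup_le_iff]

theorem filter_stab_ne_bot_eq_biUnion :
    ({x | stab x ≠ ⊥} : Finset (G → A))
      = ({P : Subgroup G | (Nat.card P).Prime} : Finset _).biUnion (fixedConfigs A) := by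
  ext x
  simp only [mem_filter, mem_univ, true_and, mem_biUnion, mem_fixedConfigs]
  constructor
  · intro hx
    obtain ⟨P, hPx, hP⟩ := Subgroup.exists_card_prime_le_of_ne_bot hx
    exact ⟨P, hP, hPx⟩
  · rintro ⟨P, hP, hPx⟩ hbot
    rw [hbot, le_bot_iff] at hPx
    rw [hPx, Subgroup.card_bot] at hP
    exact Nat.not_prime_one hP

theorem card_fixedConfigs_of_card_eq {H : Subgroup G} {d : ℕ} (h : Nat.card H = d) :
    #(fixedConfigs A H) = Fintype.card A ^ (Nat.card G / d) := by
  subst h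
  rw [card_fixedConfigs, ← H.index_mul_card, Nat.mul_div_cancel _ Nat.card_pos]

theorem card_fixedConfigs_le_of_lt_card {H : Subgroup G} {d : ℕ} (hd : d ∣ Nat.card G)
    (h : d < Nat.card H) : #(fixedConfigs A H) ≤ Fintype.card A ^ (Nat.card G / d - 1) := by
  have hindex := Subgroup.index_lt_div_of_lt_card hd h
  rw [card_fixedConfigs]
  rcases (Fintype.card A).eq_zero_or_pos with hA | hA
  · rw [hA, zero_pow H.index_ne_zero_of_finite]
    exact Nat.zero_le _
  · exact Nat.pow_le_pow_right hA (by omega)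

theorem card_stab_ne_bot_le :
    #({x | stab x ≠ ⊥} : Finset (G → A)) ≤
      #{P : Subgroup G | Nat.card P = (Nat.card G).minFac} *
          Fintype.card A ^ (Nat.card G / (Nat.card G).minFac) +
        #{P : Subgroup G | (Nat.card P).Prime} *
          Fintype.card A ^ (Nat.card G / (Nat.card G).minFac - 1) := by
  set p := (Nat.card G).minFac
  set S : Finset (Subgroup G) := {P | (Nat.card P).Prime}
  have hsmall : ∑ P ∈ S with Nat.card (P : Subgroup G) = p, #(fixedConfigs A P)
      ≤ #{P : Subgroup G | Nat.card P = p} * Fintype.card A ^ (Nat.card G / p) := by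
    rw [sum_congr rfl fun P hP => card_fixedConfigs_of_card_eq A (mem_filter.mp hP).2, sum_const,
      smul_eq_mul]
    exact Nat.mul_le_mul_right _ (card_le_card (filter_subset_filter _ (subset_univ S)))
  have hlarge : ∑ P ∈ S with Nat.card (P : Subgroup G) ≠ p, #(fixedConfigs A P)
      ≤ #S * Fintype.card A ^ (Nat.card G / p - 1) := by
    refine (sum_le_card_nsmul _ _ _ fun P hP => ?_).trans
      (Nat.mul_le_mul_right _ (card_le_card (filter_subset _ S)))
    simp only [S, mem_filter, mem_univ, true_and] at hP
    have hle : p ≤ Nat.card P :=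
      Nat.minFac_le_of_dvd hP.1.two_le (Subgroup.card_subgroup_dvd_card P)
    exact card_fixedConfigs_le_of_lt_card A (Nat.minFac_dvd _) (hle.lt_of_ne (Ne.symm hP.2))
  rw [filter_stab_ne_bot_eq_biUnion]
  calc #(S.biUnion (fixedConfigs A)) ≤ ∑ P ∈ S, #(fixedConfigs A P) := card_biUnion_le
    _ = ∑ P ∈ S with Nat.card (P : Subgroup G) = p, #(fixedConfigs A P)
          + ∑ P ∈ S with Nat.card (P : Subgroup G) ≠ p, #(fixedConfigs A P) :=
        (sum_filter_add_sum_filter_not _ _ _).symm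
    _ ≤ _ := add_le_add hsmall hlarge

theorem le_card_stab_ne_bot (hG : Nat.card G ≠ 1) :
    #{P : Subgroup G | Nat.card P = (Nat.card G).minFac} *
        Fintype.card A ^ (Nat.card G / (Nat.card G).minFac) ≤
      #({x | stab x ≠ ⊥} : Finset (G → A)) +
        #{P : Subgroup G | Nat.card P = (Nat.card G).minFac} ^ 2 *
          Fintype.card A ^ (Nat.card G / (Nat.card G).minFac - 1) := by
  set p := (Nat.card G).minFac
  set Sp : Finset (Subgroup G) := {P | Nat.card P = p}
  have hp : p.Prime := Nat.minFac_prime hG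
  have hunion : #(Sp.biUnion (fixedConfigs A)) ≤ #({x | stab x ≠ ⊥} : Finset (G → A)) := by
    rw [filter_stab_ne_bot_eq_biUnion]
    refine card_le_card (biUnion_subset_biUnion_of_subset_left _ fun P hP => ?_)
    simp only [Sp, mem_filter, mem_univ, true_and] at hP ⊢
    exact hP ▸ hp
  have hpairs : ∑ PP ∈ Sp.offDiag, #(fixedConfigs A PP.1 ∩ fixedConfigs A PP.2)
      ≤ #Sp ^ 2 * Fintype.card A ^ (Nat.card G / p - 1) := by
    refine (sum_le_card_nsmul _ _ _ fun PP hPP => ?_).trans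
      (Nat.mul_le_mul_right _ ((offDiag_card Sp).trans_le (Nat.sub_le _ _) |>.trans_eq (sq _).symm))
    simp only [Sp, mem_offDiag, mem_filter, mem_univ, true_and] at hPP
    obtain ⟨h1, h2, hne⟩ := hPP
    rw [fixedConfigs_inter]
    refine card_fixedConfigs_le_of_lt_card A (Nat.minFac_dvd _) ?_
    exact h1 ▸ Subgroup.card_lt_card_sup_of_ne (h1.trans h2.symm) hne
  calc #Sp * Fintype.card A ^ (Nat.card G / p)
      = ∑ P ∈ Sp, #(fixedConfigs A P) := by
        rw [sum_congr rfl fun P hP => card_fixedConfigs_of_card_eq A (mem_filter.mp hP).2,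
          sum_const, smul_eq_mul]
    _ ≤ #(Sp.biUnion (fixedConfigs A))
          + ∑ PP ∈ Sp.offDiag, #(fixedConfigs A PP.1 ∩ fixedConfigs A PP.2) :=
        sum_card_le_card_biUnion_add_sum_card_inter _ _
    _ ≤ _ := add_le_add hunion hpairs

theorem card_aperiodic_add_card_stab_ne_bot :
    Nat.card {x : G → A // stab x = ⊥} + #({x | stab x ≠ ⊥} : Finset (G → A))
      = Fintype.card A ^ Nat.card G := by
  rw [Nat.card_eq_fintype_card, Fintype.card_subtype, card_filter_add_card_filter_not,
    card_univ, Fintype.card_fun, Nat.card_eq_fintype_card]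

theorem abs_card_aperiodic_sub_le (hG : Nat.card G ≠ 1) :
    |(Nat.card {x : G → A // stab x = ⊥} : ℝ) - (Fintype.card A : ℝ) ^ Nat.card G +
        #{P : Subgroup G | Nat.card P = (Nat.card G).minFac} *
          (Fintype.card A : ℝ) ^ (Nat.card G / (Nat.card G).minFac)| ≤
      (#{P : Subgroup G | (Nat.card P).Prime} +
          #{P : Subgroup G | Nat.card P = (Nat.card G).minFac} ^ 2 : ℝ) *
        (Fintype.card A : ℝ) ^ (Nat.card G / (Nat.card G).minFac - 1) := by
  set N := #{P : Subgroup G | Nat.card P = (Nat.card G).minFac}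
  set M := #{P : Subgroup G | (Nat.card P).Prime}
  set B := #({x | stab x ≠ ⊥} : Finset (G → A))
  set k := Nat.card G / (Nat.card G).minFac
  set a := Fintype.card A
  have hsum : (Nat.card {x : G → A // stab x = ⊥} : ℝ) + B = (a : ℝ) ^ Nat.card G := by
    exact_mod_cast card_aperiodic_add_card_stab_ne_bot A
  have hupper : (B : ℝ) ≤ N * (a : ℝ) ^ k + M * (a : ℝ) ^ (k - 1) := by
    exact_mod_cast card_stab_ne_bot_le A
  have hlower : (N : ℝ) * (a : ℝ) ^ k ≤ B + N ^ 2 * (a : ℝ) ^ (k - 1) := by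
    exact_mod_cast le_card_stab_ne_bot A hG
  have hM : (0 : ℝ) ≤ M * (a : ℝ) ^ (k - 1) := by positivity
  have hN : (0 : ℝ) ≤ N ^ 2 * (a : ℝ) ^ (k - 1) := by positivity
  rw [abs_le]
  constructor <;> linarith

end Counting

open Filter Asymptotics

/-- with `n = |G| ≥ 2`, `p` the smallest prime dividing `n`, `c` the
number of elements of `G` of order exactly `p`, and `f q` the number of aperiodic
configurations in `{0,…,q−1}^G`, we have
`f q = q^n − (c/(p−1))·q^{n/p} + o(q^{n/p})` as `q → ∞`. -/
theorem ac_asymptotics [Group G] [Fintype G] (hn : 2 ≤ Fintype.card G) :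
    (fun q : ℕ =>
        (Nat.card {x : G → Fin q // stab x = ⊥} : ℝ) -
          (q : ℝ) ^ (Fintype.card G) +
          ((Nat.card {g : G // orderOf g = (Fintype.card G).minFac} : ℝ) /
              (((Fintype.card G).minFac : ℝ) - 1)) *
            (q : ℝ) ^ (Fintype.card G / (Fintype.card G).minFac)) =o[atTop]
      (fun q : ℕ => (q : ℝ) ^ (Fintype.card G / (Fintype.card G).minFac)) := by
  simp only [← Nat.card_eq_fintype_card] at hn ⊢
  have hp : (Nat.card G).minFac.Prime := Nat.minFac_prime (by omega)
  have hk : Nat.card G / (Nat.card G).minFac - 1 < Nat.card G / (Nat.card G).minFac :=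
    Nat.sub_one_lt (Nat.div_pos (Nat.minFac_le (by omega)) hp.pos).ne'
  have hc : (Nat.card {g : G // orderOf g = (Nat.card G).minFac} : ℝ) /
      ((Nat.card G).minFac - 1) = #{P : Subgroup G | Nat.card P = (Nat.card G).minFac} := by
    rw [card_orderOf_eq_prime hp, Nat.cast_mul, Nat.cast_sub hp.one_le, Nat.cast_one,
      mul_div_cancel_right₀ _ (sub_ne_zero.mpr (by exact_mod_cast hp.ne_one))]
  simp only [hc]
  refine IsBigO.trans_isLittleO ?_
    ((isLittleO_pow_pow_atTop_of_lt hk).comp_tendsto tendsto_natCast_atTop_atTop)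
  refine IsBigO.of_bound (#{P : Subgroup G | (Nat.card P).Prime} +
      #{P : Subgroup G | Nat.card P = (Nat.card G).minFac} ^ 2 : ℝ)
    (Eventually.of_forall fun q => ?_)
  have hbound := abs_card_aperiodic_sub_le (G := G) (Fin q) (by omega)
  rw [Fintype.card_fin] at hbound
  rwa [Real.norm_eq_abs, Function.comp_apply, norm_pow, Real.norm_natCast]
end
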